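/- arXiv:2104.00255 — 3 statements merged into one kernel-verified Lean document; each statement's English description precedes it below -/
import Mathlib

section
/- The deterministic platoon coordination game G^d admits at least one pure Nash equilibrium: there exists an action profile w* ∈ W = W^1 × ⋯ × W^N such that for every vehicle i and every w_i ∈ W^i, U^i(w*_i, w*_{-i}, τ) ≥ U^i(w_i, w*_{-i}, τ). -/
open scoped BigOperators

/-- Departure time of a vehicle from its `(k+1)`-st node (`0`-indexed `k`):
`d 0 = t0 + w 0`, `d (k+1) = d k + tt (path k) (d k) + w (k+1)`. -/
def depart {E : Type*} (tt : E → ℕ → ℕ) (t0 : ℕ) (path : ℕ → E) (w : ℕ → ℕ) : ℕ → ℕ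
  | 0 => t0 + w 0
  | k + 1 => depart tt t0 path w k + tt (path k) (depart tt t0 path w k) + w (k + 1)

/-- The platoon set `C(e,t,w,τ)`: vehicles entering edge `e` at time instance `t`. -/
def platoon {E ι : Type*} (len : ι → ℕ) (path : ι → ℕ → E)
    (tt : E → ℕ → ℕ) (t0 : ι → ℕ) (w : ι → ℕ → ℕ) (e : E) (t : ℕ) : Set ι :=
  {j | ∃ k < len j, path j k = e ∧ depart tt (t0 j) (path j) (w j) k = t}

/-- Vehicle `i`'s utility: total platooning reward along its path minus waiting cost. -/
noncomputable def utility {E ι : Type*} (len : ι → ℕ) (path : ι → ℕ → E)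
    (tt : E → ℕ → ℕ) (t0 : ι → ℕ) (R : ℕ → E → ℝ) (Λ : ι → (ℕ → ℕ) → ℝ)
    (w : ι → ℕ → ℕ) (i : ι) : ℝ :=
  (∑ k ∈ Finset.range (len i),
      R ((platoon len path tt t0 w (path i k)
            (depart tt (t0 i) (path i) (w i) k)).ncard) (path i k))
    - Λ i (w i)

/-- `r(n,e) = ∑_{j=1}^{n} R(j,e)`; in particular `r(0,e) = 0`. -/
noncomputable def rsum {E : Type*} (R : ℕ → E → ℝ) (n : ℕ) (e : E) : ℝ :=
  ∑ j ∈ Finset.Icc 1 n, R j e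

/-- The candidate potential
`Φ(w,τ) = ∑_{t∈ℕ} ∑_{e∈E} r(|C(e,t,w,τ)|,e) - ∑_i Λ_i(wⁱ)`. -/
noncomputable def potential {E ι : Type*} [Fintype E] [Fintype ι]
    (len : ι → ℕ) (path : ι → ℕ → E) (tt : E → ℕ → ℕ) (t0 : ι → ℕ)
    (R : ℕ → E → ℝ) (Λ : ι → (ℕ → ℕ) → ℝ) (w : ι → ℕ → ℕ) : ℝ :=
  (∑' t : ℕ, ∑ e : E, rsum R ((platoon len path tt t0 w e t).ncard) e)
    - ∑ i : ι, Λ i (w i)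

/-!
The game is an exact potential game. Vehicle `i` enters edge `e` at time `t` at most once,
because its departure times strictly increase, and then the increment
`r(|C|, e) - r(|C \ {i}|, e) = R(|C|, e)` of the potential at `(e, t)` is exactly the reward `i`
collects there; the sets `C \ {i}` do not depend on `wⁱ`. So a unilateral deviation changes
`Uⁱ` and `Φ` by the same amount, and a maximiser of `Φ` over the finite set `W¹ × ⋯ × Wᴺ` is
a pure Nash equilibrium.
-/

open Finset Function

section ExactPotential

variable {ι α : Type*} [DecidableEq ι]

def IsExactPotential (U : ι → (ι → α) → ℝ) (Φ : (ι → α) → ℝ) : Prop :=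
  ∀ w i a, U i w - U i (update w i a) = Φ w - Φ (update w i a)

theorem IsExactPotential.exists_nash [Fintype ι] {U : ι → (ι → α) → ℝ} {Φ : (ι → α) → ℝ}
    (hΦ : IsExactPotential U Φ) (W : ι → Finset α) (hW : ∀ i, (W i).Nonempty) :
    ∃ w ∈ Fintype.piFinset W, ∀ i, ∀ a ∈ W i, U i (update w i a) ≤ U i w := by
  obtain ⟨w, hw, hmax⟩ :=
    (Fintype.piFinset W).exists_max_image Φ (Fintype.piFinset_nonempty.mpr hW)
  refine ⟨w, hw, fun i a ha => ?_⟩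
  have hdev : update w i a ∈ Fintype.piFinset W :=
    Fintype.mem_piFinset.mpr fun j => by
      rcases eq_or_ne j i with rfl | hj
      · simpa using ha
      · simpa [hj] using Fintype.mem_piFinset.mp hw j
  linarith [hΦ w i a, hmax _ hdev]

end ExactPotential

theorem rsum_ncard_sub_rsum_ncard_sdiff_singleton {E ι : Type*} (R : ℕ → E → ℝ) (e : E)
    {A : Set ι} (hA : A.Finite) (i : ι) [Decidable (i ∈ A)] :
    rsum R A.ncard e - rsum R (A \ {i}).ncard e = if i ∈ A then R A.ncard e else 0 := by
  split_ifs with hi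
  · rw [← Set.ncard_sdiff_singleton_add_one hi hA, rsum, rsum,
      sum_Icc_succ_top (Nat.succ_le_succ (Nat.zero_le _))]
    ring
  · rw [Set.sdiff_singleton_eq_self hi, sub_self]

theorem depart_strictMono {E : Type*} {tt : E → ℕ → ℕ} (htt : ∀ e t, 0 < tt e t)
    (t0 : ℕ) (path : ℕ → E) (w : ℕ → ℕ) : StrictMono (depart tt t0 path w) :=
  strictMono_nat_of_lt_succ fun k => by
    have := htt (path k) (depart tt t0 path w k)
    simp only [depart]
    omega

section Platoon

variable {E ι : Type*} (len : ι → ℕ) (path : ι → ℕ → E) (tt : E → ℕ → ℕ) (t0 : ι → ℕ)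

noncomputable def pathReward (R : ℕ → E → ℝ) (w : ι → ℕ → ℕ) (i : ι) : ℝ :=
  ∑ k ∈ range (len i),
    R ((platoon len path tt t0 w (path i k) (depart tt (t0 i) (path i) (w i) k)).ncard)
      (path i k)

theorem utility_eq_pathReward_sub (R : ℕ → E → ℝ) (Λ : ι → (ℕ → ℕ) → ℝ)
    (w : ι → ℕ → ℕ) (i : ι) :
    utility len path tt t0 R Λ w i = pathReward len path tt t0 R w i - Λ i (w i) :=
  rfl

theorem platoon_update_sdiff_singleton [DecidableEq ι] (w : ι → ℕ → ℕ) (i : ι)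
    (a : ℕ → ℕ) (e : E) (t : ℕ) :
    platoon len path tt t0 (update w i a) e t \ {i} = platoon len path tt t0 w e t \ {i} := by
  ext j
  by_cases hj : j = i
  · simp [hj]
  · simp [platoon, hj]

def departureTimes [Fintype ι] (w : ι → ℕ → ℕ) : Finset ℕ :=
  univ.biUnion fun j => (range (len j)).image (depart tt (t0 j) (path j) (w j))

theorem depart_mem_departureTimes [Fintype ι] (w : ι → ℕ → ℕ) {j : ι} {k : ℕ}
    (hk : k < len j) : depart tt (t0 j) (path j) (w j) k ∈ departureTimes len path tt t0 w :=
  mem_biUnion.mpr ⟨j, mem_univ j, mem_image_of_mem _ (mem_range.mpr hk)⟩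

theorem platoon_eq_empty_of_notMem_departureTimes [Fintype ι] {w : ι → ℕ → ℕ} {t : ℕ}
    (ht : t ∉ departureTimes len path tt t0 w) (e : E) :
    platoon len path tt t0 w e t = ∅ :=
  Set.eq_empty_of_forall_notMem fun _ ⟨_, hk, _, hkt⟩ =>
    ht (hkt ▸ depart_mem_departureTimes len path tt t0 w hk)

theorem potential_eq_sum [Fintype E] [Fintype ι] (R : ℕ → E → ℝ) (Λ : ι → (ℕ → ℕ) → ℝ)
    (w : ι → ℕ → ℕ) {s : Finset ℕ} (hs : departureTimes len path tt t0 w ⊆ s) :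
    potential len path tt t0 R Λ w
      = ∑ t ∈ s, ∑ e : E, rsum R (platoon len path tt t0 w e t).ncard e
        - ∑ j, Λ j (w j) := by
  rw [potential, tsum_eq_sum fun t ht => ?_]
  refine sum_eq_zero fun e _ => ?_
  rw [platoon_eq_empty_of_notMem_departureTimes len path tt t0 (fun h => ht (hs h)),
    Set.ncard_empty]
  simp [rsum]

theorem sum_sum_ite_mem_platoon_eq_pathReward [Fintype E] (htt : ∀ e t, 0 < tt e t)
    (R : ℕ → E → ℝ) (w : ι → ℕ → ℕ) (i : ι) [∀ e t, Decidable (i ∈ platoon len path tt t0 w e t)]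
    {s : Finset ℕ} (hs : ∀ k < len i, depart tt (t0 i) (path i) (w i) k ∈ s) :
    ∑ t ∈ s, ∑ e : E, (if i ∈ platoon len path tt t0 w e t
        then R (platoon len path tt t0 w e t).ncard e else 0)
      = pathReward len path tt t0 R w i := by
  classical
  set d := depart tt (t0 i) (path i) (w i)
  set visit : ℕ → ℕ × E := fun k => (d k, path i k)
  have hvisit : (range (len i)).image visit ⊆ s ×ˢ univ := by
    simp only [subset_iff, mem_image, mem_range, mem_product, mem_univ, and_true]
    rintro _ ⟨k, hk, rfl⟩
    exact hs k hk
  rw [← sum_product', ← sum_subset hvisit, sum_image]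
  · exact sum_congr rfl fun k hk => if_pos ⟨k, mem_range.mp hk, rfl, rfl⟩
  · exact fun k _ l _ hkl => (depart_strictMono htt _ _ _).injective (congrArg Prod.fst hkl)
  · rintro ⟨t, e⟩ _ hte
    refine if_neg fun ⟨k, hk, hke, hkt⟩ => hte ?_
    exact mem_image.mpr ⟨k, mem_range.mpr hk, Prod.ext hkt hke⟩

theorem pathReward_eq_sum_sub [Fintype E] [Finite ι] (htt : ∀ e t, 0 < tt e t)
    (R : ℕ → E → ℝ) (w : ι → ℕ → ℕ) (i : ι)
    {s : Finset ℕ} (hs : ∀ k < len i, depart tt (t0 i) (path i) (w i) k ∈ s) :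
    pathReward len path tt t0 R w i
      = ∑ t ∈ s, ∑ e : E, rsum R (platoon len path tt t0 w e t).ncard e
        - ∑ t ∈ s, ∑ e : E, rsum R (platoon len path tt t0 w e t \ {i}).ncard e := by
  classical
  rw [← sum_sum_ite_mem_platoon_eq_pathReward len path tt t0 htt R w i hs,
    ← sum_sub_distrib]
  refine sum_congr rfl fun t _ => ?_
  rw [← sum_sub_distrib]
  exact sum_congr rfl fun e _ =>
    (rsum_ncard_sub_rsum_ncard_sdiff_singleton R e (Set.toFinite _) i).symm

theorem potential_isExactPotential [Fintype E] [Fintype ι] [DecidableEq ι]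
    (htt : ∀ e t, 0 < tt e t) (R : ℕ → E → ℝ) (Λ : ι → (ℕ → ℕ) → ℝ) :
    IsExactPotential (fun i w => utility len path tt t0 R Λ w i)
      (potential len path tt t0 R Λ) := by
  intro w i a
  set w' := update w i a
  set s := departureTimes len path tt t0 w ∪ departureTimes len path tt t0 w'
  have hs : departureTimes len path tt t0 w ⊆ s := subset_union_left
  have hs' : departureTimes len path tt t0 w' ⊆ s := subset_union_right
  have hΛ : ∑ j, Λ j (w j) - ∑ j, Λ j (w' j) = Λ i (w i) - Λ i a := by
    rw [← sum_sub_distrib, Fintype.sum_eq_single i fun j hj => by simp [w', hj]]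
    simp [w']
  simp only [utility_eq_pathReward_sub,
    pathReward_eq_sum_sub len path tt t0 htt R w i fun k hk =>
      hs (depart_mem_departureTimes len path tt t0 w hk),
    pathReward_eq_sum_sub len path tt t0 htt R w' i fun k hk =>
      hs' (depart_mem_departureTimes len path tt t0 w' hk),
    potential_eq_sum len path tt t0 R Λ w hs, potential_eq_sum len path tt t0 R Λ w' hs',
    w', platoon_update_sdiff_singleton, update_self]
  linarith

end Platoon

/-- **Theorem 1 (existence of a pure Nash equilibrium).**  The deterministic platoon
coordination game admits at least one pure Nash equilibrium: there is a feasible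
profile `w*` such that no vehicle can increase its utility by unilaterally changing
its waiting times within its action set. -/
theorem deterministic_platoon_game_has_pure_NE
    {E ι : Type*} [Fintype E] [Fintype ι] [DecidableEq ι]
    (len : ι → ℕ) (path : ι → ℕ → E) (tt : E → ℕ → ℕ) (htt : ∀ e t, 0 < tt e t)
    (t0 : ι → ℕ) (R : ℕ → E → ℝ) (Λ : ι → (ℕ → ℕ) → ℝ)
    (W : ι → Finset (ℕ → ℕ)) (hW : ∀ i, (W i).Nonempty) :
    ∃ wstar : ι → ℕ → ℕ, (∀ j, wstar j ∈ W j) ∧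
      ∀ i : ι, ∀ wi ∈ W i,
        utility len path tt t0 R Λ wstar i
          ≥ utility len path tt t0 R Λ (Function.update wstar i wi) i := by
  obtain ⟨wstar, hmem, hNE⟩ :=
    (potential_isExactPotential len path tt t0 htt R Λ).exists_nash W hW
  exact ⟨wstar, Fintype.mem_piFinset.mp hmem, hNE⟩
end

section
/- Unilateral-deviation cardinality identity (Equation (13)): suppose vehicle i's path edges e^i_1,…,e^i_{n_i} are pairwise distinct, and let w' = (w'_i, w_{-i}) and w'' = (w''_i, w_{-i}) be two action profiles that differ only in vehicle i's component. Let d'^i_k and d''^i_k denote vehicle i's departure times computed under w' and w'', respectively, and let k be an index with d'^i_k ≠ d''^i_k. Then C(e^i_k, d'^i_k, w', τ) = C(e^i_k, d'^i_k, w'', τ) ∪ {i} with i ∉ C(e^i_k, d'^i_k, w'', τ), and in particular |C(e^i_k, d'^i_k, w', τ)| = |C(e^i_k, d'^i_k, w'', τ)| + 1. -/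
open scoped BigOperators

/-- **Unilateral-deviation cardinality identity (Equation (13)).**  Suppose vehicle
`i`'s path edges are pairwise distinct, and let `w' = (wi', w₋ᵢ)` and
`w'' = (wi'', w₋ᵢ)` differ only in vehicle `i`'s component.  If `k` is an index of
vehicle `i`'s path at which the two departure times differ, then the platoon that
vehicle `i` joins on edge `path i k` at its `w'`-departure time consists exactly of
the corresponding `w''`-platoon together with `i` itself, and its cardinality is one
larger. -/
theorem unilateral_deviation_cardinality_identity
    {E ι : Type*} [Fintype ι] [DecidableEq ι]
    (len : ι → ℕ) (path : ι → ℕ → E) (tt : E → ℕ → ℕ) (t0 : ι → ℕ)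
    (i : ι)
    (hdistinct : ∀ k < len i, ∀ l < len i, path i k = path i l → k = l)
    (w : ι → ℕ → ℕ) (wi' wi'' : ℕ → ℕ)
    (k : ℕ) (hk : k < len i)
    (hne : depart tt (t0 i) (path i) wi' k ≠ depart tt (t0 i) (path i) wi'' k) :
    platoon len path tt t0 (Function.update w i wi') (path i k)
        (depart tt (t0 i) (path i) wi' k)
      = platoon len path tt t0 (Function.update w i wi'') (path i k)
          (depart tt (t0 i) (path i) wi' k) ∪ {i}
    ∧ i ∉ platoon len path tt t0 (Function.update w i wi'') (path i k)
          (depart tt (t0 i) (path i) wi' k)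
    ∧ (platoon len path tt t0 (Function.update w i wi') (path i k)
          (depart tt (t0 i) (path i) wi' k)).ncard
        = (platoon len path tt t0 (Function.update w i wi'') (path i k)
            (depart tt (t0 i) (path i) wi' k)).ncard + 1 := by
  set d := depart tt (t0 i) (path i) wi' k with hd
  have hmem' : i ∈ platoon len path tt t0 (Function.update w i wi') (path i k) d :=
    ⟨k, hk, rfl, by simp [hd]⟩
  have hnot : i ∉ platoon len path tt t0 (Function.update w i wi'') (path i k) d := by
    rintro ⟨l, hl, hpl, hdl⟩
    have hlk : l = k := hdistinct l hl k hk hpl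
    subst hlk
    rw [Function.update_self] at hdl
    exact hne (hdl ▸ rfl)
  have hset : platoon len path tt t0 (Function.update w i wi') (path i k) d
      = platoon len path tt t0 (Function.update w i wi'') (path i k) d ∪ {i} := by
    ext j
    by_cases hj : j = i
    · subst hj; simp [hmem']
    · simp only [platoon, Set.mem_setOf_eq, Set.union_singleton, Set.mem_insert_iff, hj,
        false_or, Function.update_of_ne hj]
  exact ⟨hset, hnot, by
    rw [hset, Set.union_singleton, Set.ncard_insert_of_notMem hnot (Set.toFinite _)]⟩
end

section
/- Corollary 1: the deterministic receding-horizon platoon coordination game G^d_n is an exact potential game and therefore admits at least one pure Nash equilibrium. That is, the function Φ_n(w_n) = Σ_{t∈ℕ} Σ_{e∈E} r(|C_n(e,t,w_n,τ̄_n)|, e) − Σ_{i} Λ_i(w^i_n), with r(n,e) = Σ_{j=1}^{n} R(j,e), satisfies, for every vehicle i, every pair w'^i_n, w''^i_n ∈ W^i_n, and every w^{-i}_n, Φ_n(w'^i_n, w^{-i}_n) − Φ_n(w''^i_n, w^{-i}_n) = U^i_n(w'^i_n, w^{-i}_n, τ̄_n) − U^i_n(w''^i_n, w^{-i}_n, τ̄_n),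 and there exists w*_n ∈ W_n with U^i_n(w*^i_n, w*^{-i}_n, τ̄_n) ≥ U^i_n(w^i_n, w*^{-i}_n, τ̄_n) for all i and all w^i_n ∈ W^i_n. -/
open scoped BigOperators

/-!
Receding-horizon instantiation at a decision-making instance `tstar`:
vehicle `i` has residual time `ρ i` until it arrives at its next node (`ρ i = 0`
if it is located at a node), `edge i 0, …, edge i (H-1)` are the next `H` edges in
its path, and it chooses waiting times at its next `H` nodes.  The departure times
over the horizon are `d 0 = tstar + ρ i + w i 0` and
`d (l+1) = d l + τ̄ₙ(edge i l, d l) + w i (l+1)`, i.e. `depart` with start time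
`tstar + ρ i` and path length `H`; the horizon platoon sets and utilities are the
corresponding instances of `platoon`, `utility` and `potential`. -/

set_option linter.unusedSectionVars false

section Aux
variable {E ι : Type*} [Fintype E] [Fintype ι] [DecidableEq ι]
variable (len : ι → ℕ) (path : ι → ℕ → E) (tt : E → ℕ → ℕ) (t0 : ι → ℕ)

lemma depart_strictMono_s11 (h : ∀ e t, 0 < tt e t) (s : ℕ) (p : ℕ → E) (v : ℕ → ℕ) :
    StrictMono (depart tt s p v) := by
  apply strictMono_nat_of_lt_succ
  intro k
  have := h (p k) (depart tt s p v k)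
  simp only [depart]
  omega

/-- All departure times over the horizon, for profile `w`. -/
def Tset (w : ι → ℕ → ℕ) : Finset ℕ :=
  Finset.univ.biUnion fun j =>
    (Finset.range (len j)).image fun k => depart tt (t0 j) (path j) (w j) k

lemma platoon_eq_empty_of_notMem_Tset (w : ι → ℕ → ℕ) (e : E) {t : ℕ}
    (ht : t ∉ Tset len path tt t0 w) : platoon len path tt t0 w e t = ∅ := by
  ext j
  simp only [platoon, Set.mem_setOf_eq, Set.mem_empty_iff_false, iff_false]
  rintro ⟨k, hk, -, hd⟩
  exact ht (Finset.mem_biUnion.mpr ⟨j, Finset.mem_univ _,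
    Finset.mem_image.mpr ⟨k, Finset.mem_range.mpr hk, hd⟩⟩)

lemma rsum_zero (R : ℕ → E → ℝ) (e : E) : rsum R 0 e = 0 := by simp [rsum]

lemma rsum_succ (R : ℕ → E → ℝ) (n : ℕ) (e : E) :
    rsum R (n + 1) e = rsum R n e + R (n + 1) e := by
  rw [rsum, rsum, Finset.sum_Icc_succ_top (Nat.le_add_left 1 n)]

open Classical in
lemma ncard_split (S : Set ι) (i : ι) :
    S.ncard = ({j ∈ S | j ≠ i}).ncard + (if i ∈ S then 1 else 0) := by
  by_cases h : i ∈ S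
  · have hS : S = insert i {j ∈ S | j ≠ i} := by
      ext j; by_cases hj : j = i <;> simp [hj, h]
    rw [if_pos h]
    conv_lhs => rw [hS]
    rw [Set.ncard_insert_of_notMem (by simp) (Set.toFinite _)]
  · have hS : {j ∈ S | j ≠ i} = S := by
      ext j; simp only [Set.mem_setOf_eq, and_iff_left_iff_imp]
      rintro hj rfl; exact h hj
    rw [if_neg h, hS, add_zero]

lemma others_update (w : ι → ℕ → ℕ) (i : ι) (v : ℕ → ℕ) (e : E) (t : ℕ) :
    {j ∈ platoon len path tt t0 (Function.update w i v) e t | j ≠ i}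
      = {j ∈ platoon len path tt t0 w e t | j ≠ i} := by
  ext j
  simp only [Set.mem_setOf_eq, platoon]
  constructor <;> rintro ⟨hm, hne⟩ <;> refine ⟨?_, hne⟩
  · rwa [Function.update_of_ne hne] at hm
  · rwa [Function.update_of_ne hne]

lemma mem_platoon_update (w : ι → ℕ → ℕ) (i : ι) (v : ℕ → ℕ) (e : E) (t : ℕ) :
    i ∈ platoon len path tt t0 (Function.update w i v) e t ↔
      ∃ k < len i, path i k = e ∧ depart tt (t0 i) (path i) v k = t := by
  simp [platoon, Function.update_self]


open Classical in
lemma sum_ite_platoon (httbar : ∀ e t, 0 < tt e t)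
    (w : ι → ℕ → ℕ) (i : ι) (v : ℕ → ℕ) (g : E → ℕ → ℝ) (T : Finset ℕ)
    (hT : ∀ k < len i, depart tt (t0 i) (path i) v k ∈ T) :
    (∑ t ∈ T, ∑ e : E,
        if i ∈ platoon len path tt t0 (Function.update w i v) e t then g e t else 0)
      = ∑ k ∈ Finset.range (len i), g (path i k) (depart tt (t0 i) (path i) v k) := by
  have hmono := depart_strictMono_s11 tt httbar (t0 i) (path i) v
  rw [← Finset.sum_product']
  rw [← Finset.sum_filter]
  have hset : (T ×ˢ (Finset.univ : Finset E)).filter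
        (fun p => i ∈ platoon len path tt t0 (Function.update w i v) p.2 p.1)
      = (Finset.range (len i)).image
          (fun k => (depart tt (t0 i) (path i) v k, path i k)) := by
    ext ⟨t, e⟩
    simp only [Finset.mem_filter, Finset.mem_product, Finset.mem_univ, and_true,
      Finset.mem_image, Finset.mem_range, mem_platoon_update, Prod.mk.injEq]
    constructor
    · rintro ⟨htT, k, hk, he, hd⟩
      exact ⟨k, hk, hd, he⟩
    · rintro ⟨k, hk, hd, he⟩
      exact ⟨hd ▸ hT k hk, k, hk, he, hd⟩
  rw [hset, Finset.sum_image]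
  intro a _ b _ hab
  exact hmono.injective (congrArg Prod.fst hab)

open Classical in
lemma sum_platoon_update (httbar : ∀ e t, 0 < tt e t)
    (R : ℕ → E → ℝ) (w : ι → ℕ → ℕ) (i : ι) (v : ℕ → ℕ) (T : Finset ℕ)
    (hT : ∀ k < len i, depart tt (t0 i) (path i) v k ∈ T) :
    (∑ t ∈ T, ∑ e : E,
        rsum R ((platoon len path tt t0 (Function.update w i v) e t).ncard) e)
      = (∑ t ∈ T, ∑ e : E,
          rsum R (({j ∈ platoon len path tt t0 w e t | j ≠ i}).ncard) e)
        + ∑ k ∈ Finset.range (len i),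
            R ((platoon len path tt t0 (Function.update w i v) (path i k)
                  (depart tt (t0 i) (path i) v k)).ncard) (path i k) := by
  have hmono := depart_strictMono_s11 tt httbar (t0 i) (path i) v
  set m : E → ℕ → ℕ := fun e t => ({j ∈ platoon len path tt t0 w e t | j ≠ i}).ncard with hm
  have hcard : ∀ e t, (platoon len path tt t0 (Function.update w i v) e t).ncard
      = m e t + (if i ∈ platoon len path tt t0 (Function.update w i v) e t then 1 else 0) := by
    intro e t
    rw [ncard_split _ i, others_update]
  have hsplit : ∀ e t,
      rsum R ((platoon len path tt t0 (Function.update w i v) e t).ncard) e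
        = rsum R (m e t) e
          + (if i ∈ platoon len path tt t0 (Function.update w i v) e t
              then R (m e t + 1) e else 0) := by
    intro e t
    rw [hcard]
    by_cases h : i ∈ platoon len path tt t0 (Function.update w i v) e t
    · rw [if_pos h, if_pos h, rsum_succ]
    · rw [if_neg h, if_neg h, add_zero, add_zero]
  calc (∑ t ∈ T, ∑ e : E,
        rsum R ((platoon len path tt t0 (Function.update w i v) e t).ncard) e)
      = (∑ t ∈ T, ∑ e : E, rsum R (m e t) e)
        + ∑ t ∈ T, ∑ e : E,
            (if i ∈ platoon len path tt t0 (Function.update w i v) e t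
              then R (m e t + 1) e else 0) := by
        rw [← Finset.sum_add_distrib]
        refine Finset.sum_congr rfl fun t _ => ?_
        rw [← Finset.sum_add_distrib]
        exact Finset.sum_congr rfl fun e _ => hsplit e t
    _ = _ := by
        congr 1
        rw [sum_ite_platoon len path tt t0 httbar w i v _ T hT]
        refine Finset.sum_congr rfl fun k hk => ?_
        congr 1
        rw [hcard, if_pos]
        rw [mem_platoon_update]
        exact ⟨k, Finset.mem_range.mp hk, rfl, rfl⟩

lemma tsum_eq_sum_Tset (R : ℕ → E → ℝ) (w : ι → ℕ → ℕ) (T : Finset ℕ)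
    (hT : Tset len path tt t0 w ⊆ T) :
    (∑' t : ℕ, ∑ e : E, rsum R ((platoon len path tt t0 w e t).ncard) e)
      = ∑ t ∈ T, ∑ e : E, rsum R ((platoon len path tt t0 w e t).ncard) e := by
  refine tsum_eq_sum fun t ht => ?_
  refine Finset.sum_eq_zero fun e _ => ?_
  rw [platoon_eq_empty_of_notMem_Tset len path tt t0 w e fun h => ht (hT h)]
  simp [rsum]

end Aux


/-- **Corollary 1.**  The deterministic receding-horizon platoon coordination game
`Gᵈₙ` (with the conditional-mean travel times `ttbar`) is an exact potential game —
`Φₙ` satisfies the exact potential identity for every unilateral deviation — and it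
therefore admits at least one pure Nash equilibrium. -/
theorem deterministic_receding_horizon_game_exact_potential_and_NE
    {E ι : Type*} [Fintype E] [Fintype ι] [DecidableEq ι]
    (H : ℕ) (tstar : ℕ) (ρ : ι → ℕ) (edge : ι → ℕ → E)
    (ttbar : E → ℕ → ℕ) (httbar : ∀ e t, 0 < ttbar e t)
    (R : ℕ → E → ℝ) (Λ : ι → (ℕ → ℕ) → ℝ)
    (W : ι → Finset (ℕ → ℕ)) (hW : ∀ i, (W i).Nonempty) :
    (∀ (w : ι → ℕ → ℕ), (∀ j, w j ∈ W j) →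
      ∀ (i : ι) (wi' wi'' : ℕ → ℕ), wi' ∈ W i → wi'' ∈ W i →
        potential (fun _ => H) edge ttbar (fun j => tstar + ρ j) R Λ
            (Function.update w i wi')
          - potential (fun _ => H) edge ttbar (fun j => tstar + ρ j) R Λ
              (Function.update w i wi'')
        = utility (fun _ => H) edge ttbar (fun j => tstar + ρ j) R Λ
              (Function.update w i wi') i
          - utility (fun _ => H) edge ttbar (fun j => tstar + ρ j) R Λ
              (Function.update w i wi'') i)
    ∧ ∃ wstar : ι → ℕ → ℕ, (∀ j, wstar j ∈ W j) ∧
        ∀ i : ι, ∀ wi ∈ W i,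
          utility (fun _ => H) edge ttbar (fun j => tstar + ρ j) R Λ wstar i
            ≥ utility (fun _ => H) edge ttbar (fun j => tstar + ρ j) R Λ
                (Function.update wstar i wi) i := by
    classical
  have key : ∀ (w : ι → ℕ → ℕ),
      ∀ (i : ι) (wi' wi'' : ℕ → ℕ),
        potential (fun _ => H) edge ttbar (fun j => tstar + ρ j) R Λ
            (Function.update w i wi')
          - potential (fun _ => H) edge ttbar (fun j => tstar + ρ j) R Λ
              (Function.update w i wi'')
        = utility (fun _ => H) edge ttbar (fun j => tstar + ρ j) R Λ
              (Function.update w i wi') i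
          - utility (fun _ => H) edge ttbar (fun j => tstar + ρ j) R Λ
              (Function.update w i wi'') i := by
    intro w i wi' wi''
    set t0' : ι → ℕ := fun j => tstar + ρ j with ht0'
    set T : Finset ℕ :=
      Tset (fun _ => H) edge ttbar t0' (Function.update w i wi')
        ∪ Tset (fun _ => H) edge ttbar t0' (Function.update w i wi'') with hTdef
    have hmemT : ∀ (v : ℕ → ℕ),
        Tset (fun _ => H) edge ttbar t0' (Function.update w i v) ⊆ T →
        ∀ k < (fun _ : ι => H) i, depart ttbar (t0' i) (edge i) v k ∈ T := by
      intro v hsub k hk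
      apply hsub
      apply Finset.mem_biUnion.mpr
      refine ⟨i, Finset.mem_univ _, Finset.mem_image.mpr
        ⟨k, Finset.mem_range.mpr hk, ?_⟩⟩
      rw [Function.update_self]
    have hT' := hmemT wi' Finset.subset_union_left
    have hT'' := hmemT wi'' Finset.subset_union_right
    unfold potential
    rw [tsum_eq_sum_Tset _ _ _ _ R _ T Finset.subset_union_left,
        tsum_eq_sum_Tset _ _ _ _ R _ T Finset.subset_union_right,
        sum_platoon_update _ _ _ _ httbar R w i wi' T hT',
        sum_platoon_update _ _ _ _ httbar R w i wi'' T hT'']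
    unfold utility
    simp only [Function.update_self]
    have hΛ : ∀ v : ℕ → ℕ, (∑ j, Λ j (Function.update w i v j))
        = Λ i v + ∑ j ∈ Finset.univ.erase i, Λ j (w j) := by
      intro v
      rw [← Finset.add_sum_erase _ (fun j => Λ j (Function.update w i v j))
        (Finset.mem_univ i), Function.update_self]
      congr 1
      refine Finset.sum_congr rfl fun j hj => ?_
      rw [Function.update_of_ne (Finset.ne_of_mem_erase hj)]
    rw [hΛ wi', hΛ wi'']
    ring
  refine ⟨fun w _ i wi' wi'' _ _ => key w i wi' wi'', ?_⟩
  obtain ⟨wstar, hmem, hmax⟩ := Finset.exists_max_image (Fintype.piFinset W)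
    (potential (fun _ => H) edge ttbar (fun j => tstar + ρ j) R Λ)
    ⟨fun j => (hW j).choose, Fintype.mem_piFinset.mpr fun j => (hW j).choose_spec⟩
  refine ⟨wstar, fun j => Fintype.mem_piFinset.mp hmem j, ?_⟩
  intro i wi hwi
  have hupd : Function.update wstar i (wstar i) = wstar := Function.update_eq_self i wstar
  have h2 : potential (fun _ => H) edge ttbar (fun j => tstar + ρ j) R Λ
      (Function.update wstar i wi)
      ≤ potential (fun _ => H) edge ttbar (fun j => tstar + ρ j) R Λ wstar := by
    apply hmax
    refine Fintype.mem_piFinset.mpr fun j => ?_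
    by_cases hj : j = i
    · subst hj; rw [Function.update_self]; exact hwi
    · rw [Function.update_of_ne hj]; exact Fintype.mem_piFinset.mp hmem j
  have h3 := key wstar i (wstar i) wi
  rw [hupd] at h3
  linarith
end
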